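/- arXiv:2106.08142 — 5 statements merged into one kernel-verified Lean document; each statement's English description precedes it below -/
import Mathlib

section
/- In a symmetric monoidal category where every object is equipped with a commutative comonoid structure (comultiplication and counit) such that every morphism is a comonoid homomorphism and the comonoids are coherent with the monoidal structure, the monoidal product is a categorical product, with projections given by tensoring with the counit, and the monoidal unit is a terminal object. -/
open CategoryTheory MonoidalCategory

universe v u

/-- A symmetric monoidal category in which every object carries a cocommutative
comonoid structure (copy/discard) such that every morphism is a comonoid
homomorphism and the comonoids are coherent with the monoidal structure
(Fox's characterisation of cartesian categories). -/
class FoxCartesian (B : Type u) [Category.{v} B] [MonoidalCategory B]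
    [SymmetricCategory B] where
  copy : ∀ X : B, X ⟶ X ⊗ X
  discard : ∀ X : B, X ⟶ 𝟙_ B
  -- cocommutative comonoid axioms
  copy_assoc : ∀ X : B,
    copy X ≫ (copy X ▷ X) ≫ (α_ X X X).hom = copy X ≫ (X ◁ copy X)
  copy_comm : ∀ X : B, copy X ≫ (β_ X X).hom = copy X
  copy_counit : ∀ X : B, copy X ≫ (discard X ▷ X) ≫ (λ_ X).hom = 𝟙 X
  -- every morphism is a comonoid homomorphism
  nat_copy : ∀ {X Y : B} (f : X ⟶ Y), f ≫ copy Y = copy X ≫ (f ⊗ₘ f)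
  nat_discard : ∀ {X Y : B} (f : X ⟶ Y), f ≫ discard Y = discard X
  -- coherence of the comonoids with the monoidal structure
  discard_unit : discard (𝟙_ B) = 𝟙 (𝟙_ B)
  copy_unit : copy (𝟙_ B) = (λ_ (𝟙_ B)).inv
  discard_tensor : ∀ X Y : B,
    discard (X ⊗ Y) = (discard X ⊗ₘ discard Y) ≫ (λ_ (𝟙_ B)).hom
  copy_tensor : ∀ X Y : B,
    copy (X ⊗ Y) = (copy X ⊗ₘ copy Y) ≫ tensorμ X X Y Y

namespace FoxCartesian

variable {B : Type u} [Category.{v} B] [MonoidalCategory B] [SymmetricCategory B]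
  [FoxCartesian B]

/-- The first projection, obtained by discarding the second factor. -/
def proj₁ (X Y : B) : X ⊗ Y ⟶ X := (X ◁ discard Y) ≫ (ρ_ X).hom

/-- The second projection, obtained by discarding the first factor. -/
def proj₂ (X Y : B) : X ⊗ Y ⟶ Y := (discard X ▷ Y) ≫ (λ_ Y).hom

end FoxCartesian

open FoxCartesian

/-! The pairing of `f : Z ⟶ X` and `g : Z ⟶ Y` is `copy Z ≫ (f ⊗ g)`. The counit laws and
naturality of `discard` give the two projection equations. For uniqueness, naturality of `copy`
gives `h ≫ lift f g = lift (h ≫ f) (h ≫ g)`, and coherence of `copy` with `⊗`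
gives `lift proj₁ proj₂ = 𝟙`, so every `h` is the pairing of its two components. Terminality
of `𝟙_ B`: naturality of `discard` forces every map into `𝟙_ B` to be `discard`. -/

theorem CategoryTheory.MonoidalCategory.unitors_inv_tensorμ_unitors {C : Type u} [Category.{v} C]
    [MonoidalCategory C] [BraidedCategory C] (X Y : C) :
    ((ρ_ X).inv ⊗ₘ (λ_ Y).inv) ≫ tensorμ X (𝟙_ C) (𝟙_ C) Y ≫
      ((ρ_ X).hom ⊗ₘ (λ_ Y).hom) = 𝟙 (X ⊗ Y) := by
  simp only [tensorμ, braiding_tensorUnit_left]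
  monoidal

namespace FoxCartesian

variable {B : Type u} [Category.{v} B] [MonoidalCategory B] [SymmetricCategory B] [FoxCartesian B]

theorem eq_discard {X : B} (f : X ⟶ 𝟙_ B) : f = discard X := by
  rw [← nat_discard f, discard_unit, Category.comp_id]

theorem copy_discard_whiskerRight (X : B) : copy X ≫ (discard X ▷ X) = (λ_ X).inv := by
  rw [← cancel_mono (λ_ X).hom, Category.assoc, copy_counit, Iso.inv_hom_id]

-- Cocommutativity turns the left counit law into the right one.
theorem copy_whiskerLeft_discard (X : B) : copy X ≫ (X ◁ discard X) = (ρ_ X).inv := by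
  rw [← cancel_mono (ρ_ X).hom, Iso.inv_hom_id, ← copy_comm, Category.assoc, Category.assoc,
    ← BraidedCategory.braiding_naturality_left_assoc, braiding_rightUnitor, copy_counit]

def lift {X Y Z : B} (f : Z ⟶ X) (g : Z ⟶ Y) : Z ⟶ X ⊗ Y := copy Z ≫ (f ⊗ₘ g)

theorem lift_proj₁ {X Y Z : B} (f : Z ⟶ X) (g : Z ⟶ Y) : lift f g ≫ proj₁ X Y = f := by
  have : (f ⊗ₘ g) ≫ (X ◁ discard Y) = (Z ◁ discard Z) ≫ (f ▷ 𝟙_ B) := by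
    rw [MonoidalCategory.tensorHom_def, Category.assoc, ← whiskerLeft_comp, nat_discard,
      whisker_exchange]
  rw [lift, proj₁, Category.assoc, reassoc_of% this, reassoc_of% copy_whiskerLeft_discard,
    rightUnitor_naturality, Iso.inv_hom_id_assoc]

theorem lift_proj₂ {X Y Z : B} (f : Z ⟶ X) (g : Z ⟶ Y) : lift f g ≫ proj₂ X Y = g := by
  have : (f ⊗ₘ g) ≫ (discard X ▷ Y) = (discard Z ▷ Z) ≫ (𝟙_ B ◁ g) := by
    rw [tensorHom_def', Category.assoc, ← comp_whiskerRight, nat_discard, whisker_exchange]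
  rw [lift, proj₂, Category.assoc, reassoc_of% this, reassoc_of% copy_discard_whiskerRight,
    leftUnitor_naturality, Iso.inv_hom_id_assoc]

theorem comp_lift {W X Y Z : B} (h : W ⟶ Z) (f : Z ⟶ X) (g : Z ⟶ Y) :
    h ≫ lift f g = lift (h ≫ f) (h ≫ g) := by
  rw [lift, lift, reassoc_of% nat_copy h, tensorHom_comp_tensorHom]

theorem lift_proj₁_proj₂ (X Y : B) : lift (proj₁ X Y) (proj₂ X Y) = 𝟙 (X ⊗ Y) := by
  have h := tensorμ_natural (𝟙 X) (discard X) (discard Y) (𝟙 Y)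
  simp only [id_tensorHom, tensorHom_id] at h
  rw [lift, copy_tensor, proj₁, proj₂, ← tensorHom_comp_tensorHom, Category.assoc,
    ← reassoc_of% h, tensorHom_comp_tensorHom_assoc, copy_whiskerLeft_discard,
    copy_discard_whiskerRight, unitors_inv_tensorμ_unitors]

theorem lift_comp_proj₁_proj₂ {X Y Z : B} (h : Z ⟶ X ⊗ Y) :
    lift (h ≫ proj₁ X Y) (h ≫ proj₂ X Y) = h := by
  rw [← comp_lift, lift_proj₁_proj₂, Category.comp_id]

end FoxCartesian

/-- Fox's theorem, one direction: in a symmetric monoidal category whose objects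
carry natural, coherent cocommutative comonoids, the monoidal product is a
categorical product (with projections given by discarding one factor) and the
monoidal unit is a terminal object. -/
theorem fox_monoidal_is_cartesian {B : Type u} [Category.{v} B]
    [MonoidalCategory B] [SymmetricCategory B] [FoxCartesian B] :
    -- the monoidal unit is terminal
    (∀ (X : B) (f g : X ⟶ 𝟙_ B), f = g) ∧
    -- the monoidal product is a categorical product
    (∀ (X Y Z : B) (f : Z ⟶ X) (g : Z ⟶ Y),
      ∃! h : Z ⟶ X ⊗ Y, h ≫ proj₁ X Y = f ∧ h ≫ proj₂ X Y = g) := by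
  refine ⟨fun X f g => (eq_discard f).trans (eq_discard g).symm, fun X Y Z f g => ?_⟩
  refine ⟨lift f g, ⟨lift_proj₁ f g, lift_proj₂ f g⟩, ?_⟩
  rintro h ⟨rfl, rfl⟩
  exact (lift_comp_proj₁_proj₂ h).symm
end

section
/- In a cartesian bicategory B, every hom-poset Hom_B(X,Y) is an inf-semilattice: the top element is !_X ; ¡_Y (discard followed by the right adjoint of discard), and the binary meet of R, S : X → Y is Δ_X ; (R ⊗ S) ; ∇_Y (copy, then R tensor S, then cocopy). -/
open CategoryTheory MonoidalCategory

universe v u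

/-- A cartesian bicategory: a poset-enriched symmetric monoidal category in which
every object carries a cocommutative comonoid (copy/discard) whose structure maps
have right adjoints (cocopy/codiscard), the Frobenius law holds, every morphism
is a lax comonoid homomorphism, and the comonoids are coherent with the monoidal
structure. -/
class CartesianBicat (B : Type u) [Category.{v} B] [MonoidalCategory B]
    [SymmetricCategory B] [∀ X Y : B, PartialOrder (X ⟶ Y)] where
  comp_le_comp : ∀ {X Y Z : B} {f f' : X ⟶ Y} {g g' : Y ⟶ Z},
    f ≤ f' → g ≤ g' → f ≫ g ≤ f' ≫ g'
  tensorHom_le_tensorHom : ∀ {X Y X' Y' : B} {f f' : X ⟶ Y} {g g' : X' ⟶ Y'},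
    f ≤ f' → g ≤ g' → (f ⊗ₘ g) ≤ (f' ⊗ₘ g')
  copy : ∀ X : B, X ⟶ X ⊗ X
  discard : ∀ X : B, X ⟶ 𝟙_ B
  cocopy : ∀ X : B, X ⊗ X ⟶ X
  codiscard : ∀ X : B, 𝟙_ B ⟶ X
  -- cocommutative comonoid axioms
  copy_assoc : ∀ X : B,
    copy X ≫ (copy X ▷ X) ≫ (α_ X X X).hom = copy X ≫ (X ◁ copy X)
  copy_comm : ∀ X : B, copy X ≫ (β_ X X).hom = copy X
  copy_counit : ∀ X : B, copy X ≫ (discard X ▷ X) ≫ (λ_ X).hom = 𝟙 X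
  -- cocopy and codiscard are right adjoint to copy and discard
  copy_cocopy_unit : ∀ X : B, 𝟙 X ≤ copy X ≫ cocopy X
  cocopy_copy_counit : ∀ X : B, cocopy X ≫ copy X ≤ 𝟙 (X ⊗ X)
  discard_codiscard_unit : ∀ X : B, 𝟙 X ≤ discard X ≫ codiscard X
  codiscard_discard_counit : ∀ X : B, codiscard X ≫ discard X ≤ 𝟙 (𝟙_ B)
  -- the Frobenius law
  frobenius : ∀ X : B,
    cocopy X ≫ copy X = (X ◁ copy X) ≫ (α_ X X X).inv ≫ (cocopy X ▷ X)
  frobenius' : ∀ X : B,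
    cocopy X ≫ copy X = (copy X ▷ X) ≫ (α_ X X X).hom ≫ (X ◁ cocopy X)
  -- every morphism is a lax comonoid homomorphism
  lax_copy : ∀ {X Y : B} (R : X ⟶ Y), R ≫ copy Y ≤ copy X ≫ (R ⊗ₘ R)
  lax_discard : ∀ {X Y : B} (R : X ⟶ Y), R ≫ discard Y ≤ discard X
  -- coherence of the comonoids with the monoidal structure
  discard_unit : discard (𝟙_ B) = 𝟙 (𝟙_ B)
  copy_unit : copy (𝟙_ B) = (λ_ (𝟙_ B)).inv
  discard_tensor : ∀ X Y : B,
    discard (X ⊗ Y) = (discard X ⊗ₘ discard Y) ≫ (λ_ (𝟙_ B)).hom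
  copy_tensor : ∀ X Y : B,
    copy (X ⊗ Y) = (copy X ⊗ₘ copy Y) ≫ tensorμ X X Y Y

namespace CartesianBicat

variable {B : Type u} [Category.{v} B] [MonoidalCategory B] [SymmetricCategory B]
  [∀ X Y : B, PartialOrder (X ⟶ Y)] [CartesianBicat B]

/-- A map in a cartesian bicategory: a strict comonoid homomorphism. -/
def IsMap {X Y : B} (f : X ⟶ Y) : Prop :=
  f ≫ copy Y = copy X ≫ (f ⊗ₘ f) ∧ f ≫ discard Y = discard X

/-- The first projection of the tensor on maps. -/
def proj₁ (X Y : B) : X ⊗ Y ⟶ X := (X ◁ discard Y) ≫ (ρ_ X).hom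

/-- The second projection of the tensor on maps. -/
def proj₂ (X Y : B) : X ⊗ Y ⟶ Y := (discard X ▷ Y) ≫ (λ_ Y).hom

/-- The cup of the self-duality of an object. -/
def cup (X : B) : 𝟙_ B ⟶ X ⊗ X := codiscard X ≫ copy X

/-- The cap of the self-duality of an object. -/
def cap (X : B) : X ⊗ X ⟶ 𝟙_ B := cocopy X ≫ discard X

/-- The top element of a hom-poset. -/
def homTop (X Y : B) : X ⟶ Y := discard X ≫ codiscard Y

/-- The meet of two morphisms of a hom-poset. -/
def homMeet {X Y : B} (R S : X ⟶ Y) : X ⟶ Y :=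
  copy X ≫ (R ⊗ₘ S) ≫ cocopy Y

end CartesianBicat

open CartesianBicat

/-! The top element comes from the unit `𝟙 ≤ ! ≫ ¡` and lax naturality of discarding. The
candidate meet is monotone in both arguments; meeting with the top on one side collapses, by
the counit law, to `R` followed by the lax unit law of the monoid `(∇, ¡)`, so it lies below
`R`. It is the greatest lower bound because `T ≤ T ≫ Δ ≫ ∇ ≤ Δ ≫ (T ⊗ T) ≫ ∇`. -/

namespace CartesianBicat

variable {B : Type u} [Category.{v} B] [MonoidalCategory B] [SymmetricCategory B]
  [∀ X Y : B, PartialOrder (X ⟶ Y)] [CartesianBicat B]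

lemma whiskerLeft_le_whiskerLeft (Z : B) {X Y : B} {f g : X ⟶ Y} (h : f ≤ g) :
    Z ◁ f ≤ Z ◁ g := by
  simpa only [MonoidalCategory.id_tensorHom] using tensorHom_le_tensorHom (le_refl (𝟙 Z)) h

lemma whiskerRight_le_whiskerRight {X Y : B} {f g : X ⟶ Y} (h : f ≤ g) (Z : B) :
    f ▷ Z ≤ g ▷ Z := by
  simpa only [MonoidalCategory.tensorHom_id] using tensorHom_le_tensorHom h (le_refl (𝟙 Z))

lemma copy_counit_right (X : B) : copy X ≫ (X ◁ discard X) ≫ (ρ_ X).hom = 𝟙 X := by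
  rw [← copy_comm X, Category.assoc, ← BraidedCategory.braiding_naturality_left_assoc,
    braiding_rightUnitor, copy_counit]

-- The lax unit laws of `(∇, ¡)` are the mates of the counit laws of `(Δ, !)`.
lemma codiscard_cocopy_le (Y : B) : (λ_ Y).inv ≫ (codiscard Y ▷ Y) ≫ cocopy Y ≤ 𝟙 Y :=
  calc (λ_ Y).inv ≫ (codiscard Y ▷ Y) ≫ cocopy Y
      = (λ_ Y).inv ≫ (codiscard Y ▷ Y) ≫ (cocopy Y ≫ copy Y) ≫ (discard Y ▷ Y) ≫ (λ_ Y).hom := by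
        rw [Category.assoc (cocopy Y), copy_counit, Category.comp_id]
    _ ≤ (λ_ Y).inv ≫ (codiscard Y ▷ Y) ≫ 𝟙 (Y ⊗ Y) ≫ (discard Y ▷ Y) ≫ (λ_ Y).hom :=
        comp_le_comp le_rfl (comp_le_comp le_rfl (comp_le_comp (cocopy_copy_counit Y) le_rfl))
    _ = (λ_ Y).inv ≫ ((codiscard Y ≫ discard Y) ▷ Y) ≫ (λ_ Y).hom := by
        rw [Category.id_comp, MonoidalCategory.comp_whiskerRight, Category.assoc]
    _ ≤ (λ_ Y).inv ≫ (𝟙 (𝟙_ B) ▷ Y) ≫ (λ_ Y).hom :=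
        comp_le_comp le_rfl
          (comp_le_comp (whiskerRight_le_whiskerRight (codiscard_discard_counit Y) Y) le_rfl)
    _ = 𝟙 Y := by simp

lemma codiscard_cocopy_right_le (Y : B) : (ρ_ Y).inv ≫ (Y ◁ codiscard Y) ≫ cocopy Y ≤ 𝟙 Y :=
  calc (ρ_ Y).inv ≫ (Y ◁ codiscard Y) ≫ cocopy Y
      = (ρ_ Y).inv ≫ (Y ◁ codiscard Y) ≫ (cocopy Y ≫ copy Y) ≫ (Y ◁ discard Y) ≫ (ρ_ Y).hom := by
        rw [Category.assoc (cocopy Y), copy_counit_right, Category.comp_id]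
    _ ≤ (ρ_ Y).inv ≫ (Y ◁ codiscard Y) ≫ 𝟙 (Y ⊗ Y) ≫ (Y ◁ discard Y) ≫ (ρ_ Y).hom :=
        comp_le_comp le_rfl (comp_le_comp le_rfl (comp_le_comp (cocopy_copy_counit Y) le_rfl))
    _ = (ρ_ Y).inv ≫ (Y ◁ (codiscard Y ≫ discard Y)) ≫ (ρ_ Y).hom := by
        rw [Category.id_comp, MonoidalCategory.whiskerLeft_comp, Category.assoc]
    _ ≤ (ρ_ Y).inv ≫ (Y ◁ 𝟙 (𝟙_ B)) ≫ (ρ_ Y).hom :=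
        comp_le_comp le_rfl
          (comp_le_comp (whiskerLeft_le_whiskerLeft Y (codiscard_discard_counit Y)) le_rfl)
    _ = 𝟙 Y := by simp

lemma le_homTop {X Y : B} (R : X ⟶ Y) : R ≤ homTop X Y :=
  calc R = R ≫ 𝟙 Y := (Category.comp_id R).symm
    _ ≤ (R ≫ discard Y) ≫ codiscard Y := by
        rw [Category.assoc]; exact comp_le_comp le_rfl (discard_codiscard_unit Y)
    _ ≤ discard X ≫ codiscard Y := comp_le_comp (lax_discard R) le_rfl

lemma tensorHom_homTop {X Y : B} (R : X ⟶ Y) :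
    R ⊗ₘ homTop X Y = ((X ◁ discard X) ≫ (ρ_ X).hom) ≫ R ≫ (ρ_ Y).inv ≫ (Y ◁ codiscard Y) := by
  rw [homTop, MonoidalCategory.tensorHom_def', MonoidalCategory.whiskerLeft_comp, Category.assoc,
    whisker_exchange, MonoidalCategory.whiskerRight_id]
  simp only [Category.assoc]

lemma homTop_tensorHom {X Y : B} (R : X ⟶ Y) :
    homTop X Y ⊗ₘ R = ((discard X ▷ X) ≫ (λ_ X).hom) ≫ R ≫ (λ_ Y).inv ≫ (codiscard Y ▷ Y) := by
  rw [homTop, MonoidalCategory.tensorHom_def, MonoidalCategory.comp_whiskerRight, Category.assoc,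
    ← whisker_exchange, MonoidalCategory.id_whiskerLeft]
  simp only [Category.assoc]

lemma homMeet_homTop_right {X Y : B} (R : X ⟶ Y) :
    homMeet R (homTop X Y) = R ≫ (ρ_ Y).inv ≫ (Y ◁ codiscard Y) ≫ cocopy Y := by
  rw [homMeet, tensorHom_homTop, Category.assoc, ← Category.assoc (copy X), copy_counit_right,
    Category.id_comp]
  simp only [Category.assoc]

lemma homMeet_homTop_left {X Y : B} (R : X ⟶ Y) :
    homMeet (homTop X Y) R = R ≫ (λ_ Y).inv ≫ (codiscard Y ▷ Y) ≫ cocopy Y := by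
  rw [homMeet, homTop_tensorHom, Category.assoc, ← Category.assoc (copy X), copy_counit,
    Category.id_comp]
  simp only [Category.assoc]

lemma homMeet_mono {X Y : B} {R R' S S' : X ⟶ Y} (hR : R ≤ R') (hS : S ≤ S') :
    homMeet R S ≤ homMeet R' S' :=
  comp_le_comp le_rfl (comp_le_comp (tensorHom_le_tensorHom hR hS) le_rfl)

lemma homMeet_le_left {X Y : B} (R S : X ⟶ Y) : homMeet R S ≤ R :=
  calc homMeet R S ≤ homMeet R (homTop X Y) := homMeet_mono le_rfl (le_homTop S)
    _ = R ≫ (ρ_ Y).inv ≫ (Y ◁ codiscard Y) ≫ cocopy Y := homMeet_homTop_right R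
    _ ≤ R ≫ 𝟙 Y := comp_le_comp le_rfl (codiscard_cocopy_right_le Y)
    _ = R := Category.comp_id R

lemma homMeet_le_right {X Y : B} (R S : X ⟶ Y) : homMeet R S ≤ S :=
  calc homMeet R S ≤ homMeet (homTop X Y) S := homMeet_mono (le_homTop R) le_rfl
    _ = S ≫ (λ_ Y).inv ≫ (codiscard Y ▷ Y) ≫ cocopy Y := homMeet_homTop_left S
    _ ≤ S ≫ 𝟙 Y := comp_le_comp le_rfl (codiscard_cocopy_le Y)
    _ = S := Category.comp_id S

lemma le_homMeet_self {X Y : B} (T : X ⟶ Y) : T ≤ homMeet T T :=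
  calc T = T ≫ 𝟙 Y := (Category.comp_id T).symm
    _ ≤ (T ≫ copy Y) ≫ cocopy Y := by
        rw [Category.assoc]; exact comp_le_comp le_rfl (copy_cocopy_unit Y)
    _ ≤ (copy X ≫ (T ⊗ₘ T)) ≫ cocopy Y := comp_le_comp (lax_copy T) le_rfl
    _ = homMeet T T := Category.assoc _ _ _

lemma le_homMeet {X Y : B} {R S T : X ⟶ Y} (hR : T ≤ R) (hS : T ≤ S) : T ≤ homMeet R S :=
  (le_homMeet_self T).trans (homMeet_mono hR hS)

end CartesianBicat

/-- In a cartesian bicategory, every hom-poset `Hom(X, Y)` is an inf-semilattice: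
`!_X ≫ ¡_Y` is its top element, and `Δ_X ≫ (R ⊗ S) ≫ ∇_Y` is the greatest lower
bound of `R` and `S`. -/
theorem hom_poset_is_inf_semilattice {B : Type u} [Category.{v} B]
    [MonoidalCategory B] [SymmetricCategory B] [∀ X Y : B, PartialOrder (X ⟶ Y)]
    [CartesianBicat B] {X Y : B} (R S : X ⟶ Y) :
    R ≤ homTop X Y ∧
    homMeet R S ≤ R ∧ homMeet R S ≤ S ∧
    (∀ T : X ⟶ Y, T ≤ R → T ≤ S → T ≤ homMeet R S) :=
  ⟨le_homTop R, homMeet_le_left R S, homMeet_le_right R S, fun _ => le_homMeet⟩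
end

section
/- In a cartesian bicategory, a morphism f : X → Y is a comonoid homomorphism (i.e., f;Δ_Y = Δ_X;(f⊗f) and f;!_Y = !_X) if and only if f has a right adjoint in the poset-enriched sense, i.e., there exists R : Y → X with id_X ≤ f;R and R;f ≤ id_Y. -/
open CategoryTheory MonoidalCategory

universe v u

open CartesianBicat

/-! A map `f` is left adjoint to its converse `f°`. By the snake equation for the self-duality
`cup`/`cap`, the unit and counit reduce to `cap X ≤ (f ⊗ f) ≫ cap Y` and
`cup X ≫ (f ⊗ f) ≤ cup Y`; these follow from the strictness of `f` together with
`cocopy X ≫ f ≤ (f ⊗ f) ≫ cocopy Y` and `codiscard X ≫ f ≤ codiscard Y`, the mates of the lax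
homomorphism laws of `f` under the adjunctions `copy ⊣ cocopy` and `discard ⊣ codiscard`.
Conversely, if `f ⊣ R`, then the missing inequalities `copy X ≫ (f ⊗ f) ≤ f ≫ copy Y` and
`discard X ≤ f ≫ discard Y` are the mates of the lax homomorphism laws of `R`. -/

section Zigzag

variable {B : Type u} [Category.{v} B] [MonoidalCategory B]

def zigzag {X Y Z : B} (c : 𝟙_ B ⟶ X ⊗ Y) (d : Y ⊗ Z ⟶ 𝟙_ B) : Z ⟶ X :=
  (λ_ Z).inv ≫ (c ▷ Z) ≫ (α_ X Y Z).hom ≫ (X ◁ d) ≫ (ρ_ X).hom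

lemma comp_zigzag {W X Y Z : B} (g : W ⟶ Z) (c : 𝟙_ B ⟶ X ⊗ Y) (d : Y ⊗ Z ⟶ 𝟙_ B) :
    g ≫ zigzag c d = zigzag c ((Y ◁ g) ≫ d) := by
  simp only [zigzag, MonoidalCategory.whiskerLeft_comp, Category.assoc,
    leftUnitor_inv_naturality_assoc, whisker_exchange_assoc, associator_naturality_right_assoc]

lemma zigzag_comp {X X' Y Z : B} (c : 𝟙_ B ⟶ X ⊗ Y) (d : Y ⊗ Z ⟶ 𝟙_ B)
    (h : X ⟶ X') :
    zigzag c d ≫ h = zigzag (c ≫ (h ▷ Y)) d := by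
  simp only [zigzag, comp_whiskerRight, Category.assoc, ← rightUnitor_naturality,
    ← whisker_exchange_assoc, associator_naturality_left_assoc]

lemma zigzag_slide {X Y Y' Z : B} (c : 𝟙_ B ⟶ X ⊗ Y) (g : Y ⟶ Y')
    (d : Y' ⊗ Z ⟶ 𝟙_ B) :
    zigzag (c ≫ (X ◁ g)) d = zigzag c ((g ▷ Z) ≫ d) := by
  simp only [zigzag, comp_whiskerRight, MonoidalCategory.whiskerLeft_comp, Category.assoc,
    associator_naturality_middle_assoc]

end Zigzag

section IsAdjointPair

variable {B : Type u} [Category.{v} B]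

def IsAdjointPair [∀ X Y : B, LE (X ⟶ Y)] {X Y : B} (l : X ⟶ Y) (r : Y ⟶ X) : Prop :=
  𝟙 X ≤ l ≫ r ∧ r ≫ l ≤ 𝟙 Y

variable [∀ X Y : B, Preorder (X ⟶ Y)]

lemma IsAdjointPair.id (X : B) : IsAdjointPair (𝟙 X) (𝟙 X) := by
  simp [IsAdjointPair]

lemma IsAdjointPair.iso {X Y : B} (e : X ≅ Y) : IsAdjointPair e.hom e.inv := by
  simp [IsAdjointPair]

end IsAdjointPair

namespace CartesianBicat

variable {B : Type u} [Category.{v} B] [MonoidalCategory B] [SymmetricCategory B]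
  [∀ X Y : B, PartialOrder (X ⟶ Y)] [CartesianBicat B]

attribute [gcongr] comp_le_comp tensorHom_le_tensorHom

namespace IsAdjointPair

lemma comp {X Y Z : B} {l : X ⟶ Y} {r : Y ⟶ X} {l' : Y ⟶ Z} {r' : Z ⟶ Y}
    (h : IsAdjointPair l r) (h' : IsAdjointPair l' r') : IsAdjointPair (l ≫ l') (r' ≫ r) := by
  constructor
  · calc 𝟙 X ≤ l ≫ r := h.1
      _ = l ≫ 𝟙 Y ≫ r := by rw [Category.id_comp]
      _ ≤ l ≫ (l' ≫ r') ≫ r := by gcongr; exact h'.1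
      _ = (l ≫ l') ≫ r' ≫ r := by simp only [Category.assoc]
  · calc (r' ≫ r) ≫ l ≫ l' = r' ≫ (r ≫ l) ≫ l' := by simp only [Category.assoc]
      _ ≤ r' ≫ 𝟙 Y ≫ l' := by gcongr; exact h.2
      _ = r' ≫ l' := by rw [Category.id_comp]
      _ ≤ 𝟙 Z := h'.2

lemma tensor {X Y X' Y' : B} {l : X ⟶ Y} {r : Y ⟶ X} {l' : X' ⟶ Y'} {r' : Y' ⟶ X'}
    (h : IsAdjointPair l r) (h' : IsAdjointPair l' r') :
    IsAdjointPair (l ⊗ₘ l') (r ⊗ₘ r') := by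
  constructor
  · calc 𝟙 (X ⊗ X') = 𝟙 X ⊗ₘ 𝟙 X' := (id_tensorHom_id X X').symm
      _ ≤ (l ≫ r) ⊗ₘ (l' ≫ r') := tensorHom_le_tensorHom h.1 h'.1
      _ = (l ⊗ₘ l') ≫ (r ⊗ₘ r') := tensorHom_comp_tensorHom l l' r r' |>.symm
  · calc (r ⊗ₘ r') ≫ (l ⊗ₘ l') = (r ≫ l) ⊗ₘ (r' ≫ l') :=
          tensorHom_comp_tensorHom r r' l l'
      _ ≤ 𝟙 Y ⊗ₘ 𝟙 Y' := tensorHom_le_tensorHom h.2 h'.2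
      _ = 𝟙 (Y ⊗ Y') := id_tensorHom_id Y Y'

lemma whiskerRight {X Y : B} {l : X ⟶ Y} {r : Y ⟶ X} (h : IsAdjointPair l r) (Z : B) :
    IsAdjointPair (l ▷ Z) (r ▷ Z) := by
  simpa only [tensorHom_id] using h.tensor (IsAdjointPair.id Z)

lemma le_iff_mate_le {A A' C C' : B} {l : A ⟶ C} {r : C ⟶ A} {l' : A' ⟶ C'} {r' : C' ⟶ A'}
    (h : IsAdjointPair l r) (h' : IsAdjointPair l' r') {a : A ⟶ A'} {c : C ⟶ C'} :
    a ≫ l' ≤ l ≫ c ↔ r ≫ a ≤ c ≫ r' := by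
  constructor
  · intro hac
    calc r ≫ a = r ≫ a ≫ 𝟙 A' := by rw [Category.comp_id]
      _ ≤ r ≫ a ≫ l' ≫ r' := by gcongr; exact h'.1
      _ ≤ r ≫ (l ≫ c) ≫ r' := by rw [← Category.assoc a]; gcongr
      _ = (r ≫ l) ≫ c ≫ r' := by simp only [Category.assoc]
      _ ≤ 𝟙 C ≫ c ≫ r' := by gcongr; exact h.2
      _ = c ≫ r' := Category.id_comp _
  · intro hac
    calc a ≫ l' = 𝟙 A ≫ a ≫ l' := (Category.id_comp _).symm
      _ ≤ (l ≫ r) ≫ a ≫ l' := by gcongr; exact h.1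
      _ ≤ l ≫ (c ≫ r') ≫ l' := by rw [Category.assoc, ← Category.assoc r]; gcongr
      _ = l ≫ c ≫ r' ≫ l' := by simp only [Category.assoc]
      _ ≤ l ≫ c ≫ 𝟙 C' := by gcongr; exact h'.2
      _ = l ≫ c := by rw [Category.comp_id]

lemma right_unique {X Y : B} {l : X ⟶ Y} {r r' : Y ⟶ X} (h : IsAdjointPair l r)
    (h' : IsAdjointPair l r') : r = r' := by
  apply le_antisymm
  · simpa using (h.le_iff_mate_le h' (a := 𝟙 X) (c := 𝟙 Y)).1 (by simp)
  · simpa using (h'.le_iff_mate_le h (a := 𝟙 X) (c := 𝟙 Y)).1 (by simp)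

end IsAdjointPair

lemma copy_isAdjointPair (X : B) : IsAdjointPair (copy X) (cocopy X) :=
  ⟨copy_cocopy_unit X, cocopy_copy_counit X⟩

lemma discard_isAdjointPair (X : B) : IsAdjointPair (discard X) (codiscard X) :=
  ⟨discard_codiscard_unit X, codiscard_discard_counit X⟩

lemma cocopy_comp_le {X Y : B} (f : X ⟶ Y) : cocopy X ≫ f ≤ (f ⊗ₘ f) ≫ cocopy Y :=
  ((copy_isAdjointPair X).le_iff_mate_le (copy_isAdjointPair Y)).1 (lax_copy f)

lemma codiscard_comp_le {X Y : B} (f : X ⟶ Y) : codiscard X ≫ f ≤ codiscard Y := by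
  simpa using ((discard_isAdjointPair X).le_iff_mate_le (discard_isAdjointPair Y)
    (c := 𝟙 (𝟙_ B))).1 (by simpa using lax_discard f)

-- The mate of the counit law `copy_counit`: the right adjoint of `𝟙 X` can only be `𝟙 X`.
lemma codiscard_cocopy_counit (X : B) :
    (λ_ X).inv ≫ (codiscard X ▷ X) ≫ cocopy X = 𝟙 X := by
  have h := ((copy_isAdjointPair X).comp ((discard_isAdjointPair X).whiskerRight X)).comp
    (IsAdjointPair.iso (λ_ X))
  rw [Category.assoc, copy_counit X] at h
  exact h.right_unique (IsAdjointPair.id X)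

lemma zigzag_cup_cap (X : B) : zigzag (cup X) (cap X) = 𝟙 X := by
  simp only [zigzag, cup, cap, comp_whiskerRight, MonoidalCategory.whiskerLeft_comp,
    Category.assoc]
  slice_lhs 3 5 => rw [← frobenius' X]
  slice_lhs 4 6 => rw [copy_counit_right X]
  slice_lhs 1 3 => rw [codiscard_cocopy_counit X]
  simp

lemma zigzag_le_zigzag {X Y Z : B} {c c' : 𝟙_ B ⟶ X ⊗ Y} {d d' : Y ⊗ Z ⟶ 𝟙_ B}
    (hc : c ≤ c') (hd : d ≤ d') : zigzag c d ≤ zigzag c' d' := by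
  unfold zigzag
  gcongr
  · simpa only [← tensorHom_id] using tensorHom_le_tensorHom hc le_rfl
  · simpa only [← id_tensorHom] using tensorHom_le_tensorHom le_rfl hd

-- The relational converse `f°`: `f` bent around by the self-duality `cup`/`cap`.
def converse {X Y : B} (f : X ⟶ Y) : Y ⟶ X := zigzag (cup X) ((f ▷ Y) ≫ cap Y)

lemma comp_converse {X Y : B} (f : X ⟶ Y) :
    f ≫ converse f = zigzag (cup X) ((f ⊗ₘ f) ≫ cap Y) := by
  rw [converse, comp_zigzag, tensorHom_def', Category.assoc]

lemma converse_comp {X Y : B} (f : X ⟶ Y) :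
    converse f ≫ f = zigzag (cup X ≫ (f ⊗ₘ f)) (cap Y) := by
  rw [converse, zigzag_comp, ← zigzag_slide, MonoidalCategory.tensorHom_def, Category.assoc]

namespace IsMap

variable {X Y : B} {f : X ⟶ Y}

lemma cap_le (hf : IsMap f) : cap X ≤ (f ⊗ₘ f) ≫ cap Y :=
  calc cap X = (cocopy X ≫ f) ≫ discard Y := by rw [Category.assoc, hf.2]; rfl
    _ ≤ ((f ⊗ₘ f) ≫ cocopy Y) ≫ discard Y := by gcongr; exact cocopy_comp_le f
    _ = (f ⊗ₘ f) ≫ cap Y := Category.assoc _ _ _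

lemma cup_le (hf : IsMap f) : cup X ≫ (f ⊗ₘ f) ≤ cup Y :=
  calc cup X ≫ (f ⊗ₘ f) = (codiscard X ≫ f) ≫ copy Y := by
        rw [Category.assoc, hf.1, cup, Category.assoc]
    _ ≤ codiscard Y ≫ copy Y := by gcongr; exact codiscard_comp_le f
    _ = cup Y := rfl

lemma isAdjointPair_converse (hf : IsMap f) : IsAdjointPair f (converse f) := by
  constructor
  · calc 𝟙 X = zigzag (cup X) (cap X) := (zigzag_cup_cap X).symm
      _ ≤ zigzag (cup X) ((f ⊗ₘ f) ≫ cap Y) := zigzag_le_zigzag le_rfl hf.cap_le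
      _ = f ≫ converse f := (comp_converse f).symm
  · calc converse f ≫ f = zigzag (cup X ≫ (f ⊗ₘ f)) (cap Y) := converse_comp f
      _ ≤ zigzag (cup Y) (cap Y) := zigzag_le_zigzag hf.cup_le le_rfl
      _ = 𝟙 Y := zigzag_cup_cap Y

end IsMap

lemma IsAdjointPair.isMap {X Y : B} {f : X ⟶ Y} {r : Y ⟶ X} (h : IsAdjointPair f r) :
    IsMap f := by
  constructor
  · refine le_antisymm (lax_copy f) ?_
    exact (h.le_iff_mate_le (h.tensor h)).2 (lax_copy r)
  · refine le_antisymm (lax_discard f) ?_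
    simpa using (h.le_iff_mate_le (IsAdjointPair.id (𝟙_ B)) (c := discard Y)).2
      (by simpa using lax_discard r)

lemma isMap_iff_exists_isAdjointPair {X Y : B} (f : X ⟶ Y) :
    IsMap f ↔ ∃ r : Y ⟶ X, IsAdjointPair f r :=
  ⟨fun hf => ⟨converse f, hf.isAdjointPair_converse⟩, fun ⟨_, h⟩ => h.isMap⟩

end CartesianBicat

/-- In a cartesian bicategory, a morphism `f : X ⟶ Y` is a comonoid homomorphism
(i.e. `f ≫ Δ_Y = Δ_X ≫ (f ⊗ f)` and `f ≫ !_Y = !_X`) if and only if it has a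
right adjoint in the poset-enriched sense: some `R : Y ⟶ X` with `𝟙 X ≤ f ≫ R`
and `R ≫ f ≤ 𝟙 Y`. -/
theorem isMap_iff_hasRightAdjoint {B : Type u} [Category.{v} B]
    [MonoidalCategory B] [SymmetricCategory B] [∀ X Y : B, PartialOrder (X ⟶ Y)]
    [CartesianBicat B] {X Y : B} (f : X ⟶ Y) :
    IsMap f ↔ ∃ R : Y ⟶ X, 𝟙 X ≤ f ≫ R ∧ R ≫ f ≤ 𝟙 Y :=
  isMap_iff_exists_isAdjointPair f
end

section
/- In the bicategory of relations Bicat_P of an elementary existential doctrine P, the operation R ↦ R^op := P_{σ_{Y,X}}(R), induced by the symmetry of the cartesian product, is an involutive bijection Hom(X,Y) → Hom(Y,X) that is contravariant with respect to composition: (R;S)^op = S^op ; R^op and δ_X^op = δ_X. -/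
open CategoryTheory CategoryTheory.Limits

universe v u w

/-- An elementary existential doctrine on a cartesian category `C`:
a contravariant functor into inf-semilattices with top, equipped with equality
predicates `δ`, and left adjoints to reindexing along both product projections,
satisfying Beck–Chevalley, Frobenius reciprocity and the elementarity condition. -/
structure EED (C : Type u) [Category.{v} C] [HasFiniteProducts C] where
  obj : C → Type w
  semi : ∀ A : C, SemilatticeInf (obj A)
  otop : ∀ A : C, OrderTop (obj A)
  map : ∀ {A B : C}, (A ⟶ B) → obj B → obj A
  map_id : ∀ (A : C) (α : obj A), map (𝟙 A) α = α
  map_comp : ∀ {A B D : C} (f : A ⟶ B) (g : B ⟶ D) (α : obj D),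
    map (f ≫ g) α = map f (map g α)
  map_inf : ∀ {A B : C} (f : A ⟶ B) (α β : obj B), map f (α ⊓ β) = map f α ⊓ map f β
  map_top : ∀ {A B : C} (f : A ⟶ B), map f (⊤ : obj B) = (⊤ : obj A)
  /-- the equality predicate -/
  δ : ∀ A : C, obj (A ⨯ A)
  /-- existential quantification along the first projection (quantifying away the
  second factor) -/
  exFst : ∀ {X A : C}, obj (X ⨯ A) → obj X
  exFst_adj : ∀ {X A : C} (β : obj (X ⨯ A)) (α : obj X),
    exFst β ≤ α ↔ β ≤ map prod.fst α
  /-- existential quantification along the second projection -/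
  exSnd : ∀ {X A : C}, obj (X ⨯ A) → obj A
  exSnd_adj : ∀ {X A : C} (β : obj (X ⨯ A)) (α : obj A),
    exSnd β ≤ α ↔ β ≤ map prod.snd α
  bcFst : ∀ {X X' A : C} (f : X' ⟶ X) (β : obj (X ⨯ A)),
    exFst (map (prod.map f (𝟙 A)) β) = map f (exFst β)
  bcSnd : ∀ {X A A' : C} (f : A' ⟶ A) (β : obj (X ⨯ A)),
    exSnd (map (prod.map (𝟙 X) f) β) = map f (exSnd β)
  frobFst : ∀ {X A : C} (α : obj X) (β : obj (X ⨯ A)),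
    exFst (map prod.fst α ⊓ β) = α ⊓ exFst β
  frobSnd : ∀ {X A : C} (α : obj A) (β : obj (X ⨯ A)),
    exSnd (map prod.snd α ⊓ β) = α ⊓ exSnd β
  /-- elementarity: `α ↦ P_{⟨π₁,π₂⟩}(α) ⊓ P_{⟨π₂,π₃⟩}(δ_A)` is left adjoint to
  reindexing along `id_X × Δ_A`. -/
  elem : ∀ {X A : C} (α : obj (X ⨯ A)) (γ : obj (X ⨯ (A ⨯ A))),
    (map (prod.map (𝟙 X) prod.fst) α ⊓ map prod.snd (δ A) ≤ γ) ↔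
      α ≤ map (prod.map (𝟙 X) (diag A)) γ

attribute [instance] EED.semi EED.otop

variable {C : Type u} [Category.{v} C] [HasFiniteProducts C]

namespace EED

/-- Composition in the bicategory of relations `Bicat_P`: realised using the
ambient object `(X ⨯ Z) ⨯ Y` and existential quantification of the middle factor. -/
noncomputable def rcomp (P : EED C) {X Y Z : C} (R : P.obj (X ⨯ Y)) (S : P.obj (Y ⨯ Z)) :
    P.obj (X ⨯ Z) :=
  P.exFst (P.map (prod.lift (prod.fst ≫ prod.fst) prod.snd) R ⊓
    P.map (prod.lift prod.snd (prod.fst ≫ prod.snd)) S)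

/-- The graph of a morphism of the base category. -/
noncomputable def graph (P : EED C) {X Y : C} (f : X ⟶ Y) : P.obj (X ⨯ Y) :=
  P.map (prod.map f (𝟙 Y)) (P.δ Y)

/-- Tensor product of relations in `Bicat_P`. -/
noncomputable def rtensor (P : EED C) {X Y X' Y' : C} (R : P.obj (X ⨯ Y)) (S : P.obj (X' ⨯ Y')) :
    P.obj ((X ⨯ X') ⨯ (Y ⨯ Y')) :=
  P.map (prod.map prod.fst prod.fst) R ⊓ P.map (prod.map prod.snd prod.snd) S

end EED

/-!
In the internal language, `R^op (y, x) ≡ R (x, y)`. Involutivity and contravariance are pure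
reindexing: the swap is its own inverse, and under it the two conjuncts of `R;S` trade places, the
quantified middle variable being untouched (Beck–Chevalley moves the swap past `∃`). The only
real content is the symmetry of `δ`, which follows from elementarity: `δ_A` is the least
relation that is reflexive, i.e. whose restriction along the diagonal is `⊤`, and the swap of
`δ_A` is again reflexive.
-/

namespace EED

variable (P : EED C)

noncomputable def op {X Y : C} (R : P.obj (X ⨯ Y)) : P.obj (Y ⨯ X) :=
  P.map (prod.lift prod.snd prod.fst) R

theorem map_monotone {A B : C} (f : A ⟶ B) : Monotone (P.map f) := fun α β h => by
  rw [← inf_eq_left, ← P.map_inf, inf_eq_left.mpr h]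

theorem map_map_of_comp_eq_id {A B : C} {f : A ⟶ B} {g : B ⟶ A} (h : f ≫ g = 𝟙 A)
    (α : P.obj A) : P.map f (P.map g α) = α := by
  rw [← P.map_comp, h, P.map_id]

theorem le_of_map_le_map {A B : C} {f : A ⟶ B} {s : B ⟶ A} (h : s ≫ f = 𝟙 B)
    {α β : P.obj B} (hle : P.map f α ≤ P.map f β) : α ≤ β := by
  simpa only [P.map_map_of_comp_eq_id h] using P.map_monotone s hle

theorem le_map_iff_eq_of_comp_self {A : C} {f : A ⟶ A} (h : f ≫ f = 𝟙 A) {α : P.obj A} :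
    α ≤ P.map f α ↔ P.map f α = α :=
  ⟨fun hle => le_antisymm (by simpa only [P.map_map_of_comp_eq_id h] using P.map_monotone f hle)
      hle,
    fun heq => heq.ge⟩

theorem map_snd_δ_le_iff {X A : C} (γ : P.obj (X ⨯ (A ⨯ A))) :
    P.map prod.snd (P.δ A) ≤ γ ↔ ⊤ ≤ P.map (prod.map (𝟙 X) (diag A)) γ := by
  simpa only [P.map_top, top_inf_eq] using P.elem ⊤ γ

theorem map_diag_δ (A : C) : P.map (diag A) (P.δ A) = ⊤ := by
  have h := (P.map_snd_δ_le_iff (X := A) (P.map prod.snd (P.δ A))).mp le_rfl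
  rw [← P.map_comp, prod.map_snd, P.map_comp, ← P.map_top (prod.snd : A ⨯ A ⟶ A)] at h
  exact top_le_iff.mp <|
    P.le_of_map_le_map (s := prod.lift (𝟙 A) (𝟙 A)) (by simp [prod.lift_snd]) h

theorem δ_le_iff {A : C} (θ : P.obj (A ⨯ A)) : P.δ A ≤ θ ↔ P.map (diag A) θ = ⊤ := by
  refine ⟨fun h => top_le_iff.mp (P.map_diag_δ A ▸ P.map_monotone _ h), fun h => ?_⟩
  have hsnd : P.map prod.snd (P.δ A) ≤ P.map (prod.snd : A ⨯ (A ⨯ A) ⟶ A ⨯ A) θ := by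
    rw [P.map_snd_δ_le_iff, ← P.map_comp, prod.map_snd, P.map_comp, h, P.map_top]
  exact P.le_of_map_le_map (s := prod.lift prod.fst (𝟙 _)) (by simp [prod.lift_snd]) hsnd

theorem swap_comp_swap (X Y : C) :
    (prod.lift prod.snd prod.fst : X ⨯ Y ⟶ Y ⨯ X) ≫ prod.lift prod.snd prod.fst =
      𝟙 (X ⨯ Y) := by
  ext <;> simp [prod.lift_fst, prod.lift_snd]

theorem diag_comp_swap (A : C) : diag A ≫ prod.lift prod.snd prod.fst = diag A := by
  ext <;> simp [prod.lift_fst, prod.lift_snd]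

theorem op_op {X Y : C} (R : P.obj (X ⨯ Y)) : P.op (P.op R) = R :=
  P.map_map_of_comp_eq_id (swap_comp_swap X Y) R

theorem op_δ (A : C) : P.op (P.δ A) = P.δ A := by
  refine (P.le_map_iff_eq_of_comp_self (swap_comp_swap A A)).mp ((P.δ_le_iff _).mpr ?_)
  rw [← P.map_comp, diag_comp_swap, P.map_diag_δ]

theorem op_rcomp {X Y Z : C} (R : P.obj (X ⨯ Y)) (S : P.obj (Y ⨯ Z)) :
    P.op (P.rcomp R S) = P.rcomp (P.op S) (P.op R) := by
  simp only [op, rcomp]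
  rw [← P.bcFst, P.map_inf, inf_comm]
  simp only [← P.map_comp]
  congr 2 <;> congr 1 <;> ext <;> simp [prod.lift_fst, prod.lift_snd]

end EED

/-- The opposite relation `R^op = P_{σ}(R)`, induced by the symmetry of the
cartesian product of the base, is involutive and contravariant with respect to
composition in `Bicat_P`, and fixes identities. -/
theorem op_involutive_contravariant (P : EED C) {X Y Z : C}
    (R : P.obj (X ⨯ Y)) (S : P.obj (Y ⨯ Z)) :
    P.map (prod.lift prod.snd prod.fst : X ⨯ Y ⟶ Y ⨯ X)
        (P.map (prod.lift prod.snd prod.fst : Y ⨯ X ⟶ X ⨯ Y) R) = R ∧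
    P.map (prod.lift prod.snd prod.fst : Z ⨯ X ⟶ X ⨯ Z) (P.rcomp R S) =
      P.rcomp (P.map (prod.lift prod.snd prod.fst : Z ⨯ Y ⟶ Y ⨯ Z) S)
        (P.map (prod.lift prod.snd prod.fst : Y ⨯ X ⟶ X ⨯ Y) R) ∧
    P.map (prod.lift prod.snd prod.fst : X ⨯ X ⟶ X ⨯ X) (P.δ X) = P.δ X :=
  ⟨P.op_op R, P.op_rcomp R S, P.op_δ X⟩
end

section
/- In the bicategory of relations Bicat_P of an elementary existential doctrine P, an element R ∈ P(X×Y) is a map (strict comonoid homomorphism) if and only if it is total and single-valued in the internal sense: ∃_{π1 : X×Y → X}(R) = ⊤ and P_{⟨π1,π2⟩}(R) ∧ P_{⟨π1,π3⟩}(R) ≤ P_{⟨π2,π3⟩}(δ_Y), where the projections are out of X×Y×Y. -/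
open CategoryTheory CategoryTheory.Limits

universe v u w

variable {C : Type u} [Category.{v} C] [HasFiniteProducts C]

/-!
Everything reduces to the one-point rule `∃ y. φ(y) ∧ t = y ⊣⊢ φ(t)`, a consequence of
elementarity. By it, `R ; Γ_! = ∃_{π₁} R` (pulled back to `X ⨯ 1`) while `Γ_! = ⊤`, so
the counit equation says that `R` is total. Similarly `R ; Γ_Δ` is `R(x, y₁) ∧ y₁ = y₂` and
`Γ_Δ ; (R ⊗ R)` is `R(x, y₁) ∧ R(x, y₂)`. Since `R(x, y₁) ∧ y₁ = y₂ ≤ R(x, y₂)` always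
holds, the comultiplication equation says exactly that `R` is single-valued.
-/

attribute [local simp] prod.lift_fst prod.lift_snd prod.lift_fst_assoc prod.lift_snd_assoc

namespace EED

variable (P : EED C)

@[simp]
lemma map_map {A B D : C} (f : A ⟶ B) (g : B ⟶ D) (α : P.obj D) :
    P.map f (P.map g α) = P.map (f ≫ g) α :=
  (P.map_comp f g α).symm

attribute [simp] map_id map_inf map_top

lemma map_mono {A B : C} (f : A ⟶ B) {α β : P.obj B} (h : α ≤ β) :
    P.map f α ≤ P.map f β := by
  rw [← inf_eq_left] at h ⊢
  rw [← P.map_inf, h]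

@[simp]
lemma map_lift_self_delta {V A : C} (u : V ⟶ A) : P.map (prod.lift u u) (P.δ A) = ⊤ := by
  have h := (P.elem (⊤ : P.obj (V ⨯ A)) (P.map prod.snd (P.δ A))).mp inf_le_right
  simpa using P.map_mono (prod.lift (𝟙 V) u) h

lemma map_lift_inf_delta_le {V X A : C} (φ : P.obj (X ⨯ A)) (w : V ⟶ X) (u v : V ⟶ A) :
    P.map (prod.lift w u) φ ⊓ P.map (prod.lift u v) (P.δ A) ≤ P.map (prod.lift w v) φ := by
  have h := (P.elem φ (P.map (prod.map (𝟙 X) prod.snd) φ)).mpr (by simp)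
  simpa using P.map_mono (prod.lift w (prod.lift u v)) h

lemma delta_comm {V A : C} (u v : V ⟶ A) :
    P.map (prod.lift u v) (P.δ A) = P.map (prod.lift v u) (P.δ A) := by
  have key : ∀ u v : V ⟶ A, P.map (prod.lift u v) (P.δ A) ≤ P.map (prod.lift v u) (P.δ A) :=
    fun u v => by
      simpa using P.map_lift_inf_delta_le (P.map (prod.lift prod.snd prod.fst) (P.δ A)) u u v
  exact le_antisymm (key u v) (key v u)

lemma delta_prod {V A B : C} (a a' : V ⟶ A) (b b' : V ⟶ B) :
    P.map (prod.lift (prod.lift a b) (prod.lift a' b')) (P.δ (A ⨯ B)) =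
      P.map (prod.lift a a') (P.δ A) ⊓ P.map (prod.lift b b') (P.δ B) := by
  apply le_antisymm
  · refine le_inf ?_ ?_
    · simpa using P.map_lift_inf_delta_le (P.map (prod.map prod.fst prod.fst) (P.δ A))
        (prod.lift a b) (prod.lift a b) (prod.lift a' b')
    · simpa using P.map_lift_inf_delta_le (P.map (prod.map prod.snd prod.snd) (P.δ B))
        (prod.lift a b) (prod.lift a b) (prod.lift a' b')
  · calc P.map (prod.lift a a') (P.δ A) ⊓ P.map (prod.lift b b') (P.δ B)
        ≤ P.map (prod.lift (prod.lift a b) (prod.lift a' b)) (P.δ (A ⨯ B)) ⊓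
            P.map (prod.lift b b') (P.δ B) := by
          refine inf_le_inf_right _ ?_
          simpa using P.map_lift_inf_delta_le
            (P.map (prod.lift (prod.fst ≫ prod.fst) (prod.lift prod.snd (prod.fst ≫ prod.snd)))
              (P.δ (A ⨯ B)))
            (prod.lift (prod.lift a b) b) a a'
      _ ≤ P.map (prod.lift (prod.lift a b) (prod.lift a' b')) (P.δ (A ⨯ B)) := by
          simpa using P.map_lift_inf_delta_le
            (P.map (prod.lift (prod.fst ≫ prod.fst) (prod.lift (prod.fst ≫ prod.snd) prod.snd))
              (P.δ (A ⨯ B)))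
            (prod.lift (prod.lift a b) a') b b'

lemma map_lift_id_le_exFst {V A : C} (t : V ⟶ A) (β : P.obj (V ⨯ A)) :
    P.map (prod.lift (𝟙 V) t) β ≤ P.exFst β := by
  simpa using P.map_mono (prod.lift (𝟙 V) t) ((P.exFst_adj β (P.exFst β)).mp le_rfl)

lemma exFst_inf_delta {V A : C} (φ : P.obj (V ⨯ A)) (t : V ⟶ A) :
    P.exFst (φ ⊓ P.map (prod.lift (prod.fst ≫ t) prod.snd) (P.δ A)) =
      P.map (prod.lift (𝟙 V) t) φ := by
  apply le_antisymm
  · rw [P.exFst_adj, P.delta_comm]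
    simpa using P.map_lift_inf_delta_le φ prod.fst prod.snd (prod.fst ≫ t)
  · simpa using
      P.map_lift_id_le_exFst t (φ ⊓ P.map (prod.lift (prod.fst ≫ t) prod.snd) (P.δ A))

lemma graph_rcomp {X Y Z : C} (f : X ⟶ Y) (S : P.obj (Y ⨯ Z)) :
    P.rcomp (P.graph f) S = P.map (prod.map f (𝟙 Z)) S := by
  have hgraph : prod.lift (prod.fst ≫ prod.fst) prod.snd ≫ prod.map f (𝟙 Y) =
      prod.lift ((prod.fst : (X ⨯ Z) ⨯ Y ⟶ X ⨯ Z) ≫ prod.fst ≫ f) prod.snd := by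
    ext <;> simp
  rw [rcomp, graph, inf_comm, map_map, hgraph, exFst_inf_delta, map_map]
  congr 1
  ext <;> simp

lemma graph_terminal_from (X : C) : P.graph (terminal.from X) = ⊤ := by
  rw [graph, show prod.map (terminal.from X) (𝟙 (⊤_ C)) = prod.lift prod.snd prod.snd
    from prod.hom_ext (terminal.hom_ext _ _) (by simp), map_lift_self_delta]

lemma rcomp_graph_terminal_from {X Y : C} (R : P.obj (X ⨯ Y)) :
    P.rcomp R (P.graph (terminal.from Y)) = P.map prod.fst (P.exFst R) := by
  have h : prod.lift (prod.fst ≫ prod.fst) prod.snd =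
      prod.map (prod.fst : X ⨯ ⊤_ C ⟶ X) (𝟙 Y) := by
    ext <;> simp
  rw [rcomp, graph_terminal_from, map_top, inf_top_eq, h, bcFst]

lemma rcomp_graph_diag {X Y : C} (R : P.obj (X ⨯ Y)) :
    P.rcomp R (P.graph (diag Y)) =
      P.map (prod.map (𝟙 X) prod.fst) R ⊓ P.map prod.snd (P.δ Y) := by
  have hgraph : P.map (prod.lift prod.snd (prod.fst ≫ prod.snd)) (P.graph (diag Y)) =
      P.map (prod.lift prod.snd (prod.fst ≫ prod.snd ≫ prod.snd)) (P.δ Y) ⊓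
        P.map
          (prod.lift ((prod.fst : (X ⨯ (Y ⨯ Y)) ⨯ Y ⟶ _) ≫ prod.snd ≫ prod.fst) prod.snd)
          (P.δ Y) := by
    rw [graph, map_map, inf_comm, P.delta_comm _ prod.snd, ← delta_prod]
    congr 1
    ext <;> simp
  rw [rcomp, hgraph, ← inf_assoc, exFst_inf_delta]
  simp only [map_map, map_inf]
  congr 2 <;> ext <;> simp

lemma graph_diag_rcomp_rtensor_self {X Y : C} (R : P.obj (X ⨯ Y)) :
    P.rcomp (P.graph (diag X)) (P.rtensor R R) =
      P.map (prod.map (𝟙 X) prod.fst) R ⊓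
        P.map (prod.lift prod.fst (prod.snd ≫ prod.snd)) R := by
  rw [graph_rcomp, rtensor]
  simp only [map_map, map_inf]
  congr 2 <;> ext <;> simp

end EED

/-- In `Bicat_P`, a relation `R ∈ P(X ⨯ Y)` is a map (a strict comonoid
homomorphism for the comonoids transported along the graph functor) if and only
if it is total (`∃_{π₁}(R) = ⊤`) and single-valued
(`P_{⟨π₁,π₂⟩}(R) ⊓ P_{⟨π₁,π₃⟩}(R) ≤ P_{⟨π₂,π₃⟩}(δ_Y)`). -/
theorem map_iff_total_and_single_valued (P : EED C) {X Y : C} (R : P.obj (X ⨯ Y)) :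
    (P.rcomp R (P.graph (diag Y)) = P.rcomp (P.graph (diag X)) (P.rtensor R R) ∧
     P.rcomp R (P.graph (terminal.from Y)) = P.graph (terminal.from X)) ↔
    (P.exFst R = (⊤ : P.obj X) ∧
     P.map (prod.map (𝟙 X) prod.fst : X ⨯ (Y ⨯ Y) ⟶ X ⨯ Y) R ⊓
       P.map (prod.lift prod.fst (prod.snd ≫ prod.snd) : X ⨯ (Y ⨯ Y) ⟶ X ⨯ Y) R ≤
     P.map (prod.snd : X ⨯ (Y ⨯ Y) ⟶ Y ⨯ Y) (P.δ Y)) := by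
  rw [P.rcomp_graph_diag, P.graph_diag_rcomp_rtensor_self, P.rcomp_graph_terminal_from,
    P.graph_terminal_from, and_comm]
  refine and_congr ⟨fun h => ?_, fun h => by rw [h, P.map_top]⟩
    ⟨fun h => h ▸ inf_le_right, fun h => ?_⟩
  · simpa using congrArg (P.map (prod.lift (𝟙 X) (terminal.from X))) h
  · have transport : P.map (prod.map (𝟙 X) prod.fst) R ⊓ P.map prod.snd (P.δ Y) ≤
        P.map (prod.lift prod.fst (prod.snd ≫ prod.snd)) R := by
      convert P.map_lift_inf_delta_le R prod.fst (prod.snd ≫ prod.fst) (prod.snd ≫ prod.snd)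
        using 3 <;> ext <;> simp
    exact le_antisymm (le_inf inf_le_left transport) (le_inf inf_le_left h)
end
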